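/- arXiv:1108.5748 — 2 statements merged into one kernel-verified Lean document; each statement's English description precedes it below -/
import Mathlib

section
/- Let X be a connected topological space covered by finitely many closed sets S_1, ..., S_n. Then for any pair of points x, y in X, there exists a finite sequence of points x = x_0, x_1, ..., x_k = y and sets T_1, ..., T_k, each T_i belonging to {S_1, ..., S_n}, such that x_{i-1} and x_i both lie in T_i for each i. -/
/-- **Discrete walks through a finite closed cover of a connected space.**
If a connected topological space `X` is covered by finitely many closed sets
`S 1, …, S n`, then any two points `x, y ∈ X` are joined by a discrete walk:
a sequence of points `x = p 0, p 1, …, p k = y` together with sets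
`T 1, …, T k` from the cover such that `p (i-1)` and `p i` both lie in `T i`. -/
theorem discrete_walk_of_connected_closed_cover
    {X : Type*} [TopologicalSpace X] [ConnectedSpace X]
    (n : ℕ) (S : Fin n → Set X)
    (hclosed : ∀ i, IsClosed (S i))
    (hcover : (⋃ i, S i) = Set.univ)
    (x y : X) :
    ∃ (k : ℕ) (p : Fin (k + 1) → X) (T : Fin k → Fin n),
      p 0 = x ∧ p (Fin.last k) = y ∧
      ∀ i : Fin k, p i.castSucc ∈ S (T i) ∧ p i.succ ∈ S (T i) := by
  -- step relation
  set step : X → X → Prop := fun a b => ∃ i, a ∈ S i ∧ b ∈ S i with hstep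
  set A : Set X := {z | Relation.ReflTransGen step x z} with hA
  have hxA : x ∈ A := Relation.ReflTransGen.refl
  have hmem : ∀ z : X, ∃ i, z ∈ S i := by
    intro z
    have : z ∈ ⋃ i, S i := hcover ▸ Set.mem_univ z
    simpa using this
  have hclosedA : IsClosed A := by
    have : A = ⋃ i ∈ {i : Fin n | (S i ∩ A).Nonempty}, S i := by
      ext z
      simp only [Set.mem_iUnion, Set.mem_setOf_eq]
      constructor
      · intro hz
        obtain ⟨i, hi⟩ := hmem z
        exact ⟨i, ⟨z, hi, hz⟩, hi⟩
      · rintro ⟨i, ⟨w, hwS, hwA⟩, hzS⟩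
        exact hwA.tail ⟨i, hwS, hzS⟩
    rw [this]
    exact Set.Finite.isClosed_biUnion (Set.toFinite _) (fun i _ => hclosed i)
  have hopenA : IsOpen A := by
    rw [← isClosed_compl_iff]
    have : Aᶜ = ⋃ i ∈ {i : Fin n | S i ∩ A = ∅}, S i := by
      ext z
      simp only [Set.mem_iUnion, Set.mem_compl_iff, Set.mem_setOf_eq]
      constructor
      · intro hz
        obtain ⟨i, hi⟩ := hmem z
        refine ⟨i, ?_, hi⟩
        by_contra h
        obtain ⟨w, hwS, hwA⟩ := Set.nonempty_iff_ne_empty.mpr h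
        exact hz (hwA.tail ⟨i, hwS, hi⟩)
      · rintro ⟨i, hdisj, hzS⟩ hzA
        exact absurd hdisj (Set.nonempty_iff_ne_empty.mp ⟨z, hzS, hzA⟩)
    rw [this]
    exact Set.Finite.isClosed_biUnion (Set.toFinite _) (fun i _ => hclosed i)
  have hAuniv : A = Set.univ := IsClopen.eq_univ ⟨hclosedA, hopenA⟩ ⟨x, hxA⟩
  have hyA : Relation.ReflTransGen step x y := by
    have : y ∈ A := hAuniv ▸ Set.mem_univ y
    exact this
  -- convert reachability into a walk, by head induction
  clear hAuniv hopenA hclosedA hxA hmem hA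
  induction hyA using Relation.ReflTransGen.head_induction_on with
  | refl =>
    exact ⟨0, fun _ => y, Fin.elim0, rfl, rfl, fun i => i.elim0⟩
  | head hab _ ih =>
    rename_i a b _
    obtain ⟨j, haj, hbj⟩ := hab
    obtain ⟨k, p, T, hp0, hpl, hwalk⟩ := ih
    refine ⟨k + 1, Fin.cons a p, Fin.cons j T, rfl, ?_, ?_⟩
    · have : Fin.last (k + 1) = Fin.succ (Fin.last k) := rfl
      rw [this, Fin.cons_succ]
      exact hpl
    · intro i
      refine Fin.cases ?_ (fun m => ?_) i
      · simpa [Fin.castSucc, hp0] using ⟨haj, hbj⟩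
      · have h1 : (Fin.succ m).castSucc = Fin.succ m.castSucc := rfl
        simp only [h1, Fin.cons_succ]
        exact hwalk m
end

section
/- Let A(x) = e^x · A₀ + 2θ · sinh²((x − x_v)/2) · [x ≥ x_v] for constants A₀ > 0, θ ≥ 0, x_v ≥ 0, where [x ≥ x_v] is the indicator. Then for all x ≥ 0 and d ≥ 0, A(x + d) ≥ e^d · A(x). -/
lemma exp_mul_sinh_le (a b : ℝ) (ha : 0 ≤ a) (hb : 0 ≤ b) :
    Real.exp b * Real.sinh a ≤ Real.sinh (a + b) := by
  rw [Real.sinh_add, ← Real.cosh_add_sinh, add_mul]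
  have h1 : Real.sinh b * Real.sinh a ≤ Real.cosh a * Real.sinh b := by
    rw [mul_comm]
    exact mul_le_mul_of_nonneg_right (Real.sinh_lt_cosh a).le (Real.sinh_nonneg_iff.2 hb)
  nlinarith [Real.sinh_nonneg_iff.2 ha, Real.sinh_nonneg_iff.2 hb]

/-- **Exponential growth of the area of equidistant cusp neighborhoods in a
simplicial hyperbolic surface.**  Let
`A(x) = eˣ·A₀ + 2θ·sinh²((x − x_v)/2)·[x ≥ x_v]` with `A₀ > 0`, `θ ≥ 0`,
`x_v ≥ 0`.  Then for all `x ≥ 0` and `d ≥ 0`, `A(x + d) ≥ e^d · A(x)`. -/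
theorem cusp_area_grows_exponentially (A₀ θ xv : ℝ)
    (hA₀ : 0 < A₀) (hθ : 0 ≤ θ) (hxv : 0 ≤ xv)
    (A : ℝ → ℝ)
    (hA : ∀ x, A x = Real.exp x * A₀ +
      (if xv ≤ x then 2 * θ * (Real.sinh ((x - xv) / 2)) ^ 2 else 0))
    (x d : ℝ) (hx : 0 ≤ x) (hd : 0 ≤ d) :
    Real.exp d * A x ≤ A (x + d) := by
  rw [hA, hA]
  have hexp : Real.exp d * (Real.exp x * A₀) = Real.exp (x + d) * A₀ := by
    rw [Real.exp_add]; ring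
  rw [mul_add, hexp]
  gcongr
  by_cases h : xv ≤ x
  · have h' : xv ≤ x + d := le_trans h (by linarith)
    rw [if_pos h, if_pos h']
    have key : Real.exp (d / 2) * Real.sinh ((x - xv) / 2) ≤
        Real.sinh ((x + d - xv) / 2) := by
      have := exp_mul_sinh_le ((x - xv) / 2) (d / 2) (by linarith) (by linarith)
      have heq : (x - xv) / 2 + d / 2 = (x + d - xv) / 2 := by ring
      rwa [heq] at this
    have hs : 0 ≤ Real.sinh ((x - xv) / 2) := Real.sinh_nonneg_iff.2 (by linarith)
    have hsq : (Real.exp (d / 2) * Real.sinh ((x - xv) / 2)) ^ 2 ≤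
        Real.sinh ((x + d - xv) / 2) ^ 2 := by
      apply pow_le_pow_left₀ (by positivity) key
    have he : Real.exp (d / 2) ^ 2 = Real.exp d := by
      rw [sq, ← Real.exp_add]; norm_num
    rw [mul_pow, he] at hsq
    nlinarith [mul_le_mul_of_nonneg_left hsq hθ]
  · rw [if_neg h]
    simp only [mul_zero]
    split
    · positivity
    · exact le_refl 0
end
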